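/- arXiv:2211.08124 — 3 statements merged into one kernel-verified Lean document; each statement's English description precedes it below -/
import Mathlib

section
/- Let q ∈ {3, 4, 5} (a prime power with underlying prime p = 3, 2, 5 respectively) and let n be any positive integer. Then the family {s_m^{(n)} : m ∈ [n]_q} is a minimal separating set in 𝔽_q[x_1,…,x_n]^{S_n}: it separates S_n-orbits in 𝔽_q^n, and for every proper subset A ⊊ [n]_q the family {s_m^{(n)} : m ∈ A} does not separate S_n-orbits in 𝔽_q^n. -/
/-- The value of the `k`-th elementary symmetric polynomial in `n` variables on a
vector `v ∈ F^n` (it is `0` for `k > n` and `1` for `k = 0`). -/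
def esymmVal {F : Type*} [CommSemiring F] (n k : ℕ) (v : Fin n → F) : F :=
  ∑ t ∈ Finset.powersetCard k (Finset.univ : Finset (Fin n)), ∏ i ∈ t, v i

/-- Two vectors `v, w ∈ F^n` lie in the same `S_n`-orbit. -/
def SameOrbit {F : Type*} (n : ℕ) (v w : Fin n → F) : Prop :=
  ∃ π : Equiv.Perm (Fin n), ∀ i, w i = v (π i)

/-- The family `{s_i^{(n)} : i ∈ A}` separates the `S_n`-orbits in `F^n`. -/
def Separates (F : Type*) [CommSemiring F] (n : ℕ) (A : Set ℕ) : Prop :=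
  ∀ v w : Fin n → F, ¬ SameOrbit n v w → ∃ i ∈ A, esymmVal n i v ≠ esymmVal n i w

/-- `s_k^{(n)}` is irreplaceable over `F`: every subset `A ⊆ {1, …, n}` such that
`{s_i^{(n)} : i ∈ A}` separates the `S_n`-orbits in `F^n` contains `k`. -/
def Irreplaceable (F : Type*) [CommSemiring F] (n k : ℕ) : Prop :=
  ∀ A : Set ℕ, A ⊆ Set.Icc 1 n → Separates F n A → k ∈ A

/-- `[n]_q = { j·p^k : 1 ≤ j ≤ q-1, k ≥ 0, j·p^k ≤ n }`. -/
def IndexSet (p q n : ℕ) : Set ℕ :=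
  {m : ℕ | ∃ j k : ℕ, 1 ≤ j ∧ j ≤ q - 1 ∧ m = j * p ^ k ∧ m ≤ n}

set_option linter.unusedSectionVars false
set_option linter.unusedVariables false
set_option maxHeartbeats 1000000

namespace Sep15

open Polynomial Finset

/-! ### Generic polynomial coefficient lemmas -/

section CommRingSec
variable {F : Type*} [CommRing F]

lemma prod_one_add_coeff {σ : Type*} [DecidableEq σ] (s : Finset σ) (v : σ → F) (k : ℕ) :
    (∏ i ∈ s, (1 + C (v i) * X)).coeff k = ∑ t ∈ s.powersetCard k, ∏ i ∈ t, v i := by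
  induction s using Finset.induction_on generalizing k with
  | empty =>
    rcases k with _ | k
    · simp
    · simp [coeff_one, powersetCard_empty_subsingleton]
      rw [powersetCard_eq_empty.2 (by simp)]
      simp
  | insert a s ha ih =>
    rw [Finset.prod_insert ha]
    rcases k with _ | k
    · rw [coeff_zero_eq_eval_zero]
      simp [eval_prod, powersetCard_zero]
    · rw [add_mul, one_mul, coeff_add, mul_assoc, coeff_C_mul, coeff_X_mul, ih, ih,
        powersetCard_succ_insert ha]
      rw [Finset.sum_union, Finset.sum_image]
      · congr 1
        rw [Finset.mul_sum]
        apply Finset.sum_congr rfl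
        intro t ht
        have hat : a ∉ t := fun hc => ha ((mem_powersetCard.1 ht).1 hc)
        rw [Finset.prod_insert hat]
      · intro t ht u hu he
        have hat : a ∉ t := fun hc => ha ((mem_powersetCard.1 ht).1 hc)
        have hau : a ∉ u := fun hc => ha ((mem_powersetCard.1 hu).1 hc)
        have := congrArg (fun z => Finset.erase z a) he
        simpa [Finset.erase_insert hat, Finset.erase_insert hau] using this
      · rw [Finset.disjoint_left]
        intro t ht htim
        simp only [Finset.mem_image] at htim
        obtain ⟨u, hu, rfl⟩ := htim
        exact ha ((mem_powersetCard.1 ht).1 (Finset.mem_insert_self a u))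

lemma esymmVal_eq_coeff (n k : ℕ) (v : Fin n → F) :
    esymmVal n k v = (∏ i ∈ univ, (1 + C (v i) * X)).coeff k := by
  rw [prod_one_add_coeff]; rfl

lemma coeff_mul_one' (f g : F[X]) :
    (f * g).coeff 1 = f.coeff 0 * g.coeff 1 + f.coeff 1 * g.coeff 0 := by
  rw [coeff_mul, Finset.Nat.sum_antidiagonal_eq_sum_range_succ_mk]
  simp [Finset.sum_range_succ]

lemma coeff_mul_two' (f g : F[X]) :
    (f * g).coeff 2 = f.coeff 0 * g.coeff 2 + f.coeff 1 * g.coeff 1 + f.coeff 2 * g.coeff 0 := by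
  rw [coeff_mul, Finset.Nat.sum_antidiagonal_eq_sum_range_succ_mk]
  simp [Finset.sum_range_succ]

lemma coeff_mul_three' (f g : F[X]) :
    (f * g).coeff 3 = f.coeff 0 * g.coeff 3 + f.coeff 1 * g.coeff 2
      + f.coeff 2 * g.coeff 1 + f.coeff 3 * g.coeff 0 := by
  rw [coeff_mul, Finset.Nat.sum_antidiagonal_eq_sum_range_succ_mk]
  simp [Finset.sum_range_succ]

lemma coeff_zero_pow' (f : F[X]) (m : ℕ) : (f ^ m).coeff 0 = (f.coeff 0) ^ m := by
  rw [coeff_zero_eq_eval_zero, eval_pow, ← coeff_zero_eq_eval_zero]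

lemma coeff_one_pow' (f : F[X]) (m : ℕ) (hf : f.coeff 0 = 1) :
    (f ^ m).coeff 1 = (m : F) * f.coeff 1 := by
  induction m with
  | zero => simp [coeff_one]
  | succ m ih =>
    rw [pow_succ, coeff_mul_one', ih, coeff_zero_pow', hf, one_pow]
    push_cast
    ring
end CommRingSec

/-! ### Congruence of coefficients below a bound -/

section FieldSec
variable {F : Type*} [Field F]

def CEB (k : ℕ) (f g : F[X]) : Prop := ∀ i, i < k → f.coeff i = g.coeff i

lemma CEB.mul {k : ℕ} {f f' g g' : F[X]} (h : CEB k f g) (h' : CEB k f' g') :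
    CEB k (f * f') (g * g') := by
  intro i hi
  rw [coeff_mul, coeff_mul]
  apply Finset.sum_congr rfl
  intro x hx
  rw [Finset.HasAntidiagonal.mem_antidiagonal] at hx
  rw [h x.1 (by omega), h' x.2 (by omega)]

lemma CEB.cancel {k : ℕ} {f g u : F[X]} (hu : u.coeff 0 ≠ 0)
    (h : CEB k (f * u) (g * u)) : CEB k f g := by
  intro i hi
  induction i using Nat.strong_induction_on with
  | _ i ih =>
    have hc := h i hi
    rw [coeff_mul, coeff_mul] at hc
    have hmem : ((i, 0) : ℕ × ℕ) ∈ Finset.HasAntidiagonal.antidiagonal i := by simp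
    rw [← Finset.add_sum_erase _ _ hmem, ← Finset.add_sum_erase _ _ hmem] at hc
    have hrest : ∑ x ∈ (Finset.HasAntidiagonal.antidiagonal i).erase (i, 0), f.coeff x.1 * u.coeff x.2
        = ∑ x ∈ (Finset.HasAntidiagonal.antidiagonal i).erase (i, 0), g.coeff x.1 * u.coeff x.2 := by
      apply Finset.sum_congr rfl
      intro x hx
      have hx1 := Finset.HasAntidiagonal.mem_antidiagonal.1 (Finset.mem_of_mem_erase hx)
      have hxne := Finset.ne_of_mem_erase hx
      have : x.1 < i := by
        rcases Nat.lt_or_ge x.1 i with h1 | h1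
        · exact h1
        · exfalso; apply hxne
          have h2 : x.1 = i := by omega
          have h3 : x.2 = 0 := by omega
          exact Prod.ext h2 h3
      rw [ih x.1 this (by omega)]
    rw [hrest] at hc
    have := add_right_cancel hc
    exact mul_right_cancel₀ hu this

lemma CEB_derivative {k : ℕ} {f g : F[X]} (h : CEB (k + 1) f g) :
    CEB k (derivative f) (derivative g) := by
  intro i hi
  rw [coeff_derivative, coeff_derivative, h (i + 1) (by omega)]

lemma coeff_mul_expand_lt {p : ℕ} (hp : 0 < p) (R Q : F[X]) (hQ : Q.coeff 0 = 1)
    {j : ℕ} (hj : j < p) : (R * expand F p Q).coeff j = R.coeff j := by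
  rw [coeff_mul]
  have hmem : ((j, 0) : ℕ × ℕ) ∈ Finset.HasAntidiagonal.antidiagonal j := by simp
  rw [← Finset.add_sum_erase _ _ hmem]
  rw [coeff_expand hp, if_pos (dvd_zero p)]
  simp only [Nat.zero_div, hQ, mul_one]
  rw [Finset.sum_eq_zero, add_zero]
  intro x hx
  have hx1 := Finset.HasAntidiagonal.mem_antidiagonal.1 (Finset.mem_of_mem_erase hx)
  have hxne := Finset.ne_of_mem_erase hx
  have hx2 : x.2 ≠ 0 := by
    intro h0
    exact hxne (Prod.ext (by omega) h0)
  rw [coeff_expand hp, if_neg, mul_zero]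
  intro hdvd
  have := Nat.le_of_dvd (by omega) hdvd
  omega

lemma coeff_mul_expand_diff {p : ℕ} (hp : 0 < p) (R Q Q' : F[X]) {u : ℕ}
    (hlow : ∀ t, t < u → Q.coeff t = Q'.coeff t) :
    (∀ i, i < p * u → (R * expand F p Q).coeff i = (R * expand F p Q').coeff i) ∧
    (R * expand F p Q).coeff (p * u) - (R * expand F p Q').coeff (p * u)
      = R.coeff 0 * (Q.coeff u - Q'.coeff u) := by
  have key : ∀ i, i ≤ p * u → ∀ x : ℕ × ℕ, x ∈ Finset.HasAntidiagonal.antidiagonal i → x ≠ (0, p * u) →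
      R.coeff x.1 * (expand F p Q).coeff x.2 = R.coeff x.1 * (expand F p Q').coeff x.2 := by
    intro i hi x hx hxne
    have hx1 := Finset.HasAntidiagonal.mem_antidiagonal.1 hx
    rw [coeff_expand hp, coeff_expand hp]
    split_ifs with hdvd
    · obtain ⟨t, hteq⟩ := hdvd
      rw [hteq] at hx1 ⊢
      have ht : t < u ∨ (x.1 = 0 ∧ p * t = p * u) := by
        rcases Nat.lt_or_ge t u with h1 | h1
        · exact Or.inl h1
        · right
          have hti : p * t ≤ i := by omega
          have h2 : p * u ≤ p * t := Nat.mul_le_mul_left p h1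
          omega
      rcases ht with ht | ⟨h1, h2⟩
      · rw [Nat.mul_div_cancel_left t hp, hlow t ht]
      · exact absurd (Prod.ext h1 (by rw [hteq, h2])) hxne
    · rfl
  constructor
  · intro i hi
    rw [coeff_mul, coeff_mul]
    apply Finset.sum_congr rfl
    intro x hx
    apply key i (le_of_lt hi) x hx
    intro h0
    have := Finset.HasAntidiagonal.mem_antidiagonal.1 hx
    rw [h0] at this
    simp at this
    omega
  · rw [coeff_mul, coeff_mul]
    have hmem : ((0, p * u) : ℕ × ℕ) ∈ Finset.HasAntidiagonal.antidiagonal (p * u) := by simp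
    rw [← Finset.add_sum_erase _ _ hmem,
      ← Finset.add_sum_erase _ (fun x => R.coeff x.1 * (expand F p Q').coeff x.2) hmem]
    have heq : ∑ x ∈ (Finset.HasAntidiagonal.antidiagonal (p * u)).erase (0, p * u),
          R.coeff x.1 * (expand F p Q).coeff x.2
        = ∑ x ∈ (Finset.HasAntidiagonal.antidiagonal (p * u)).erase (0, p * u),
          R.coeff x.1 * (expand F p Q').coeff x.2 := by
      apply Finset.sum_congr rfl
      intro x hx
      exact key (p * u) le_rfl x (Finset.mem_of_mem_erase hx) (Finset.ne_of_mem_erase hx)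
    rw [heq]
    rw [coeff_expand hp, coeff_expand hp, if_pos (Dvd.intro u rfl), if_pos (Dvd.intro u rfl),
      Nat.mul_div_cancel_left u hp]
    ring
end FieldSec

/-! ### The generating polynomial of a multiplicity function -/

section PgenSec
variable {F : Type*} [Field F] [Fintype F] [DecidableEq F]

noncomputable def Pgen (c : F → ℕ) : F[X] := ∏ a ∈ univ, (1 + C a * X) ^ (c a)

noncomputable def Vpol (F : Type*) [Field F] [Fintype F] : F[X] := ∏ a ∈ univ, (1 + C a * X)

lemma Pgen_coeff_zero (c : F → ℕ) : (Pgen c).coeff 0 = 1 := by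
  rw [Pgen, coeff_zero_eq_eval_zero, eval_prod]
  simp

lemma Pgen_congr {c c' : F → ℕ} (h : ∀ a, a ≠ 0 → c a = c' a) : Pgen c = Pgen c' := by
  unfold Pgen
  apply Finset.prod_congr rfl
  intro a _
  by_cases ha : a = 0
  · subst ha; simp
  · rw [h a ha]

lemma natDegree_one_add_le (b : F) : (1 + C b * X).natDegree ≤ 1 := by
  refine le_trans (natDegree_add_le _ _) ?_
  simp only [natDegree_one, max_le_iff]
  exact ⟨by omega, le_trans (natDegree_C_mul_le b X) (by simp)⟩

lemma Pgen_natDegree_le (c : F → ℕ) : (Pgen c).natDegree ≤ ∑ a ∈ univ.erase 0, c a := by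
  refine le_trans (Polynomial.natDegree_prod_le _ _) ?_
  have he : ∑ i ∈ univ.erase (0:F), ((1 + C i * X) ^ c i).natDegree
      = ∑ i : F, ((1 + C i * X) ^ c i).natDegree :=
    Finset.sum_erase _ (by simp)
  rw [← he]
  apply Finset.sum_le_sum
  intro a _
  refine le_trans Polynomial.natDegree_pow_le ?_
  simpa using Nat.mul_le_mul_left (c a) (natDegree_one_add_le a)

lemma coeff_one_Pgen (c : F → ℕ) : (Pgen c).coeff 1 = ∑ a ∈ univ, (c a : F) * a := by
  rw [Pgen]
  have h : ∀ s : Finset F, (∏ a ∈ s, (1 + C a * X) ^ (c a)).coeff 1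
      = ∑ a ∈ s, (c a : F) * a := by
    intro s
    induction s using Finset.induction_on with
    | empty => simp [coeff_one]
    | insert a s ha ih =>
      rw [Finset.prod_insert ha, Finset.sum_insert ha, coeff_mul_one', ih]
      have h0 : ((1 + C a * X) ^ (c a)).coeff 0 = 1 := by
        rw [coeff_zero_pow']
        simp
      have hprod0 : (∏ b ∈ s, (1 + C b * X) ^ (c b)).coeff 0 = 1 := by
        rw [coeff_zero_eq_eval_zero, eval_prod]
        simp
      rw [h0, hprod0, coeff_one_pow' _ _ (by simp [coeff_one])]
      have : (1 + C a * X).coeff 1 = a := by simp [coeff_one]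
      rw [this, one_mul, mul_one, add_comm]
  exact h univ
end PgenSec

/-! ### Counting and orbits -/

section CntSec
variable {F : Type*} [Field F] [Fintype F] [DecidableEq F]

def cnt {n : ℕ} (v : Fin n → F) (a : F) : ℕ := (univ.filter (fun i => v i = a)).card

lemma prod_eq_Pgen_cnt {n : ℕ} (v : Fin n → F) :
    (∏ i ∈ univ, (1 + C (v i) * X)) = Pgen (cnt v) := by
  rw [Pgen]
  rw [← Finset.prod_fiberwise_of_maps_to (t := univ) (g := v) (fun i _ => mem_univ _)
      (fun i => (1 + C (v i) * X))]
  apply Finset.prod_congr rfl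
  intro a _
  rw [show (univ.filter (fun i => v i = a)).prod (fun i => (1 + C (v i) * X))
      = (univ.filter (fun i => v i = a)).prod (fun _ => (1 + C a * X)) from
    Finset.prod_congr rfl (fun i hi => by rw [(Finset.mem_filter.1 hi).2])]
  rw [Finset.prod_const, cnt]

lemma sum_cnt {n : ℕ} (v : Fin n → F) : ∑ a ∈ univ, cnt v a = n := by
  unfold cnt
  rw [← Finset.card_eq_sum_card_fiberwise (f := v) (fun i _ => mem_univ (v i))]
  simp

lemma sameOrbit_of_cnt_eq {n : ℕ} {v w : Fin n → F} (h : ∀ a, cnt v a = cnt w a) :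
    SameOrbit n v w := by
  have hcard : ∀ a : F, Fintype.card {i // w i = a} = Fintype.card {i // v i = a} := by
    intro a
    rw [Fintype.card_subtype, Fintype.card_subtype]
    exact (h a).symm
  have e : ∀ a : F, {i // w i = a} ≃ {i // v i = a} := fun a => Fintype.equivOfCardEq (hcard a)
  refine ⟨((Equiv.sigmaFiberEquiv w).symm.trans
    ((Equiv.sigmaCongrRight e).trans (Equiv.sigmaFiberEquiv v))), fun i => ?_⟩
  simp only [Equiv.trans_apply, Equiv.sigmaFiberEquiv, Equiv.sigmaCongrRight,
    Equiv.coe_fn_mk, Equiv.coe_fn_symm_mk]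
  exact ((e (w i)) ⟨i, rfl⟩).2.symm

lemma esymmVal_eq_of_sameOrbit {n : ℕ} {v w : Fin n → F} (h : SameOrbit n v w) (k : ℕ) :
    esymmVal n k v = esymmVal n k w := by
  obtain ⟨π, hπ⟩ := h
  rw [esymmVal_eq_coeff, esymmVal_eq_coeff]
  congr 1
  rw [← Equiv.prod_comp π (fun i => (1 + C (v i) * X))]
  apply Finset.prod_congr rfl
  intro i _
  rw [hπ i]
end CntSec

/-! ### Peeling off the p-th power part -/

section PeelSec
variable {F : Type*} [Field F] [Fintype F] [DecidableEq F] {p : ℕ} [Fact p.Prime] [CharP F p]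

noncomputable def frobEq (F : Type*) [Field F] [Fintype F] (p : ℕ) [Fact p.Prime] [CharP F p] :
    F ≃ F :=
  Equiv.ofBijective (fun a => a ^ p)
    (Finite.injective_iff_bijective.1 (fun a b h => by
      have h1 : (a - b) ^ p = 0 := by rw [sub_pow_char, h, sub_self]
      have h2 := pow_eq_zero_iff (n := p) (Fact.out : p.Prime).ne_zero |>.1 h1
      exact sub_eq_zero.1 h2))

lemma frobEq_apply (a : F) : frobEq F p a = a ^ p := rfl

lemma frobEq_zero : frobEq F p 0 = 0 := by
  rw [frobEq_apply]
  exact zero_pow (Fact.out : p.Prime).ne_zero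

lemma one_add_CX_pow_p (a : F) : (1 + C a * X) ^ p = 1 + C (a ^ p) * X ^ p := by
  rw [add_pow_char, one_pow, mul_pow, ← C_pow]

lemma peel (c : F → ℕ) :
    Pgen c = Pgen (fun a => c a % p)
      * expand F p (Pgen (fun b => c ((frobEq F p).symm b) / p)) := by
  have h1 : ∀ a : F, (1 + C a * X) ^ (c a)
      = (1 + C a * X) ^ (c a % p) * ((1 + C a * X) ^ p) ^ (c a / p) := by
    intro a
    rw [← pow_mul, ← pow_add]
    congr 1
    exact (Nat.mod_add_div (c a) p).symm
  calc Pgen c = ∏ a ∈ univ, ((1 + C a * X) ^ (c a % p) * ((1 + C a * X) ^ p) ^ (c a / p)) := by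
        rw [Pgen]; exact Finset.prod_congr rfl (fun a _ => h1 a)
    _ = Pgen (fun a => c a % p) * ∏ a ∈ univ, ((1 + C a * X) ^ p) ^ (c a / p) := by
        rw [Pgen, Finset.prod_mul_distrib]
    _ = Pgen (fun a => c a % p) * expand F p (Pgen (fun b => c ((frobEq F p).symm b) / p)) := by
        congr 1
        have h2 : ∀ a : F, ((1 + C a * X) ^ p) ^ (c a / p)
            = expand F p ((1 + C (a ^ p) * X) ^ (c a / p)) := by
          intro a
          have hx : expand F p (1 + C (a ^ p) * X) = 1 + C (a ^ p) * X ^ p := by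
            rw [map_add, map_one, map_mul, expand_C, expand_X]
          rw [one_add_CX_pow_p, map_pow (expand F p), hx]
        rw [Finset.prod_congr rfl (fun a _ => h2 a), ← map_prod]
        congr 1
        rw [Pgen]
        rw [← Equiv.prod_comp (frobEq F p)
          (fun b => (1 + C b * X) ^ (c ((frobEq F p).symm b) / p))]
        apply Finset.prod_congr rfl
        intro a _
        rw [Equiv.symm_apply_apply]
        rfl
end PeelSec

/-! ### Core injectivity for q = p (the W-trick) -/

section WSec
variable {F : Type*} [Field F] [Fintype F] [DecidableEq F] {p : ℕ} [Fact p.Prime] [CharP F p]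

noncomputable def Wpol (r : F → ℕ) : F[X] :=
  ∑ a ∈ univ, C ((r a : F) * a) * ∏ b ∈ univ.erase a, (1 + C b * X)

lemma derivative_finset_prod {ι : Type*} [DecidableEq ι] (s : Finset ι) (f : ι → F[X]) :
    derivative (∏ i ∈ s, f i) = ∑ i ∈ s, (∏ j ∈ s.erase i, f j) * derivative (f i) := by
  induction s using Finset.induction_on with
  | empty => simp
  | insert a s ha ih =>
    rw [Finset.prod_insert ha, derivative_mul, ih, Finset.sum_insert ha,
      Finset.erase_insert ha, Finset.mul_sum]
    congr 1
    · exact mul_comm _ _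
    · apply Finset.sum_congr rfl
      intro b hb
      rw [Finset.erase_insert_of_ne (by rintro rfl; exact ha hb)]
      rw [Finset.prod_insert (fun hc => ha (Finset.mem_of_mem_erase hc))]
      ring

lemma deriv_identity (r : F → ℕ) :
    derivative (Pgen r) * Vpol F = Pgen r * Wpol r := by
  rw [Pgen, Wpol, Vpol, derivative_finset_prod, Finset.sum_mul, Finset.mul_sum]
  apply Finset.sum_congr rfl
  intro a _
  have hda : derivative (1 + C a * X) = C a := by
    rw [derivative_add, derivative_one, derivative_C_mul, derivative_X, mul_one, zero_add]
  rw [derivative_pow, hda]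
  rcases h : r a with _ | m
  · simp [h]
  · simp only [Nat.add_sub_cancel]
    have h1 : ∏ c ∈ univ, (1 + C c * X) ^ (r c)
        = (1 + C a * X) ^ (m + 1) * ∏ b ∈ univ.erase a, (1 + C b * X) ^ (r b) := by
      rw [← h, Finset.mul_prod_erase univ (fun c => (1 + C c * X) ^ r c) (mem_univ a)]
    have h2 : (∏ c ∈ univ, (1 + C c * X))
        = (1 + C a * X) * ∏ b ∈ univ.erase a, (1 + C b * X) :=
      (Finset.mul_prod_erase _ _ (mem_univ a)).symm
    rw [h1, h2, C_mul]
    push_cast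
    ring

lemma natDegree_Wpol_le (r : F → ℕ) : (Wpol r).natDegree ≤ Fintype.card F - 2 := by
  rw [Wpol]
  apply Polynomial.natDegree_sum_le_of_forall_le
  intro a _
  by_cases ha : a = 0
  · subst ha; simp
  · refine le_trans (natDegree_mul_le) ?_
    rw [natDegree_C, zero_add]
    have h0 : (0 : F) ∈ univ.erase a := Finset.mem_erase.2 ⟨fun h => ha h.symm, mem_univ _⟩
    have hk : ∏ b ∈ univ.erase a, (1 + C b * X)
        = ∏ b ∈ (univ.erase a).erase 0, (1 + C b * X) :=
      (Finset.prod_erase _ (by simp)).symm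
    rw [hk]
    refine le_trans (Polynomial.natDegree_prod_le _ _) ?_
    refine le_trans (Finset.sum_le_sum (fun b _ => natDegree_one_add_le b)) ?_
    rw [Finset.sum_const, smul_eq_mul, mul_one]
    rw [Finset.card_erase_of_mem h0, Finset.card_erase_of_mem (mem_univ a), Finset.card_univ]
    omega

lemma Wpol_eval (r : F → ℕ) {a : F} (ha : a ≠ 0) :
    (Wpol r).eval (-a⁻¹) = (r a : F) * a * ∏ c ∈ univ.erase a, (1 + c * (-a⁻¹)) := by
  rw [Wpol, eval_finset_sum]
  rw [Finset.sum_eq_single a]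
  · rw [eval_mul, eval_C, eval_prod]
    congr 1
    apply Finset.prod_congr rfl
    intro c _
    simp
  · intro b _ hb
    rw [eval_mul, eval_prod]
    have hmem : a ∈ univ.erase b := Finset.mem_erase.2 ⟨fun h => hb h.symm, mem_univ _⟩
    rw [Finset.prod_eq_zero hmem, mul_zero]
    rw [eval_add, eval_one, eval_mul, eval_C, eval_X]
    rw [mul_neg, mul_inv_cancel₀ ha]
    ring
  · intro h; exact absurd (mem_univ a) h

lemma prod_factor_ne_zero {a : F} (ha : a ≠ 0) :
    (∏ c ∈ univ.erase a, (1 + c * (-a⁻¹))) ≠ 0 := by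
  rw [Finset.prod_ne_zero_iff]
  intro c hc
  intro h0
  have : c * a⁻¹ = 1 := by
    have := h0
    rw [mul_neg] at this
    linear_combination -this
  have : c = a := by
    field_simp at this
    exact this
  exact (Finset.mem_erase.1 hc).1 this

/-- core injectivity for q = p -/
lemma lemmaBase_p (hcard : Fintype.card F = p) {r r' : F → ℕ}
    (hr : ∀ a, r a < p) (hr' : ∀ a, r' a < p)
    (hceb : CEB p (Pgen r) (Pgen r')) : ∀ a, a ≠ 0 → r a = r' a := by
  have hp2 : 2 ≤ p := (Fact.out : p.Prime).two_le
  -- derivative congruence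
  have hd : CEB (p - 1) (derivative (Pgen r)) (derivative (Pgen r')) := by
    have := CEB_derivative (k := p - 1) (f := Pgen r) (g := Pgen r')
    apply this
    intro i hi
    exact hceb i (by omega)
  -- products
  have hVc : CEB (p - 1) (Vpol F) (Vpol F) := fun i _ => rfl
  have hRc : CEB (p - 1) (Pgen r') (Pgen r) := fun i hi => (hceb i (by omega)).symm
  have hbig : CEB (p - 1) (Pgen r' * (derivative (Pgen r) * Vpol F))
      (Pgen r * (derivative (Pgen r') * Vpol F)) := by
    intro i hi
    exact (hRc.mul (hd.mul hVc)) i hi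
  rw [deriv_identity r, deriv_identity r'] at hbig
  have hre : Pgen r' * (Pgen r * Wpol r) = Wpol r * (Pgen r * Pgen r') := by ring
  have hre' : Pgen r * (Pgen r' * Wpol r') = Wpol r' * (Pgen r * Pgen r') := by ring
  rw [hre, hre'] at hbig
  have hu : (Pgen r * Pgen r').coeff 0 ≠ 0 := by
    rw [Polynomial.mul_coeff_zero, Pgen_coeff_zero, Pgen_coeff_zero, mul_one]
    exact one_ne_zero
  have hW : CEB (p - 1) (Wpol r) (Wpol r') := CEB.cancel hu hbig
  have hWeq : Wpol r = Wpol r' := by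
    ext i
    by_cases hi : i < p - 1
    · exact hW i hi
    · push_neg at hi
      have h1 : (Wpol r).natDegree < i := by
        have := natDegree_Wpol_le r; rw [hcard] at this; omega
      have h2 : (Wpol r').natDegree < i := by
        have := natDegree_Wpol_le r'; rw [hcard] at this; omega
      rw [coeff_eq_zero_of_natDegree_lt h1, coeff_eq_zero_of_natDegree_lt h2]
  intro a ha
  have hev := congrArg (eval (-a⁻¹)) hWeq
  rw [Wpol_eval r ha, Wpol_eval r' ha] at hev
  have hκ := prod_factor_ne_zero ha
  have hcast : (r a : F) = (r' a : F) := by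
    have := mul_right_cancel₀ hκ hev
    exact mul_right_cancel₀ ha this
  have hmod := (CharP.natCast_eq_natCast F p).1 hcast
  have := Nat.ModEq.eq_of_lt_of_lt hmod (hr a) (hr' a)
  exact this

end WSec

/-! ### Core injectivity for q = 4 -/

section Q4Sec
variable {F : Type*} [Field F] [Fintype F] [DecidableEq F] [CharP F 2]

lemma coeff2_mul_expand2 (S G : F[X]) (hG : G.coeff 0 = 1) (hS : S.coeff 0 = 1) :
    (S * expand F 2 G).coeff 2 = S.coeff 2 + G.coeff 1 := by
  have c0 : (expand F 2 G).coeff 0 = 1 := by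
    rw [coeff_expand (by norm_num)]; norm_num [hG]
  have c1 : (expand F 2 G).coeff 1 = 0 := by
    rw [coeff_expand (by norm_num)]; norm_num
  have c2 : (expand F 2 G).coeff 2 = G.coeff 1 := by
    rw [coeff_expand (by norm_num)]; norm_num
  rw [coeff_mul_two', c0, c1, c2, hS]
  ring

lemma coeff3_mul_expand2 (S G : F[X]) (hG : G.coeff 0 = 1) :
    (S * expand F 2 G).coeff 3 = S.coeff 3 + S.coeff 1 * G.coeff 1 := by
  have c0 : (expand F 2 G).coeff 0 = 1 := by
    rw [coeff_expand (by norm_num)]; norm_num [hG]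
  have c1 : (expand F 2 G).coeff 1 = 0 := by
    rw [coeff_expand (by norm_num)]; norm_num
  have c2 : (expand F 2 G).coeff 2 = G.coeff 1 := by
    rw [coeff_expand (by norm_num)]; norm_num
  have c3 : (expand F 2 G).coeff 3 = 0 := by
    rw [coeff_expand (by norm_num)]; norm_num
  rw [coeff_mul_three', c0, c1, c2, c3]
  ring

lemma lemmaBase_4 (hcard : Fintype.card F = 4) {r r' : F → ℕ}
    (hr : ∀ a, r a < 2) (hr' : ∀ a, r' a < 2) (Q Q' : F[X])
    (hQ : Q.coeff 0 = 1) (hQ' : Q'.coeff 0 = 1)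
    (h : ∀ j, 0 < j → j ≤ 3 →
      (Pgen r * expand F 2 Q).coeff j = (Pgen r' * expand F 2 Q').coeff j) :
    ∀ a, a ≠ 0 → r a = r' a := by
  haveI : Fact (Nat.Prime 2) := ⟨Nat.prime_two⟩
  have htwo : (2 : F) = 0 := by
    have := CharP.cast_eq_zero F 2
    exact_mod_cast this
  -- find a generator ω of the multiplicative group
  obtain ⟨ω, hω0, hω1⟩ : ∃ ω : F, ω ≠ 0 ∧ ω ≠ 1 := by
    by_contra hcon
    push_neg at hcon
    have hsub : (univ : Finset F) ⊆ {0, 1} := by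
      intro x _
      simp only [Finset.mem_insert, Finset.mem_singleton]
      by_cases hx : x = 0
      · exact Or.inl hx
      · exact Or.inr (hcon x hx)
    have h1 := Finset.card_le_card hsub
    have h2 : ({0, 1} : Finset F).card ≤ 2 :=
      le_trans (Finset.card_insert_le _ _) (by simp)
    rw [Finset.card_univ, hcard] at h1
    omega
  have hω3 : ω ^ 3 = 1 := by
    have := FiniteField.pow_card_sub_one_eq_one ω hω0
    rw [hcard] at this
    exact this
  have hsum : 1 + ω + ω ^ 2 = 0 := by
    have hfac : (ω - 1) * (ω ^ 2 + ω + 1) = 0 := by linear_combination hω3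
    rcases mul_eq_zero.1 hfac with hz | hz
    · exact absurd (sub_eq_zero.1 hz) hω1
    · linear_combination hz
  have hω2 : ω ^ 2 = 1 + ω := by linear_combination hsum - (1 + ω) * htwo
  have hω20 : ω ^ 2 ≠ 0 := pow_ne_zero _ hω0
  have hω21 : ω ^ 2 ≠ 1 := by
    intro hz
    have h4 : ω * ω ^ 2 = 1 := by linear_combination hω3
    rw [hz, mul_one] at h4
    exact hω1 h4
  have hω2ω : ω ^ 2 ≠ ω := by
    intro hz
    have : ω * ω = ω * 1 := by linear_combination hz
    exact hω1 (mul_left_cancel₀ hω0 this)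
  have m0 : (0 : F) ∉ ({1, ω, ω ^ 2} : Finset F) := by
    simp only [Finset.mem_insert, Finset.mem_singleton]
    push_neg
    exact ⟨fun hz => one_ne_zero hz.symm, fun hz => hω0 hz.symm, fun hz => hω20 hz.symm⟩
  have m1 : (1 : F) ∉ ({ω, ω ^ 2} : Finset F) := by
    simp only [Finset.mem_insert, Finset.mem_singleton]
    push_neg
    exact ⟨fun hz => hω1 hz.symm, fun hz => hω21 hz.symm⟩
  have mw : ω ∉ ({ω ^ 2} : Finset F) := by
    simp only [Finset.mem_singleton]
    exact fun hz => hω2ω hz.symm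
  have huniv : (univ : Finset F) = {0, 1, ω, ω ^ 2} := by
    symm
    apply Finset.eq_univ_of_card
    rw [hcard, Finset.card_insert_of_notMem m0, Finset.card_insert_of_notMem m1,
      Finset.card_insert_of_notMem mw, Finset.card_singleton]
  -- bits infrastructure
  have bitF : ∀ m : ℕ, m < 2 → ((m : F) = 0 ∨ (m : F) = 1) := by
    intro m hm
    interval_cases m
    · exact Or.inl (by norm_num)
    · exact Or.inr (by norm_num)
  have bitadd : ∀ x y : F, (x = 0 ∨ x = 1) → (y = 0 ∨ y = 1) → (x + y = 0 ∨ x + y = 1) := by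
    rintro x y (rfl | rfl) (rfl | rfl)
    · exact Or.inl (by ring)
    · exact Or.inr (by ring)
    · exact Or.inr (by ring)
    · exact Or.inl (by linear_combination htwo)
  have bitcast : ∀ m m' : ℕ, m < 2 → m' < 2 → (m : F) = (m' : F) → m = m' := by
    intro m m' hm hm' hz
    interval_cases m <;> interval_cases m'
    · rfl
    · exfalso; rw [Nat.cast_zero, Nat.cast_one] at hz; exact one_ne_zero hz.symm
    · exfalso; rw [Nat.cast_zero, Nat.cast_one] at hz; exact one_ne_zero hz
    · rfl
  have bitsum1 : ∀ m m' : ℕ, m < 2 → m' < 2 → (m : F) + (m' : F) = 1 → m + m' = 1 := by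
    intro m m' hm hm' hz
    interval_cases m <;> interval_cases m'
    · exfalso
      rw [Nat.cast_zero, add_zero] at hz
      exact zero_ne_one hz
    · rfl
    · rfl
    · exfalso
      rw [Nat.cast_one] at hz
      exact one_ne_zero (by linear_combination htwo - hz)
  have L2 : ∀ A B : F, (A = 0 ∨ A = 1) → (B = 0 ∨ B = 1) → A + B * ω = 0 → A = 0 ∧ B = 0 := by
    rintro A B (rfl | rfl) (rfl | rfl) hAB
    · exact ⟨rfl, rfl⟩
    · exact absurd (by linear_combination hAB) hω0
    · exact absurd (by linear_combination hAB) one_ne_zero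
    · exact absurd (show ω = 1 by linear_combination hAB - htwo) hω1
  -- coefficient extraction
  have hR0 : (Pgen r).coeff 0 = 1 := Pgen_coeff_zero r
  have hR'0 : (Pgen r').coeff 0 = 1 := Pgen_coeff_zero r'
  have e1 : (Pgen r).coeff 1 = (Pgen r').coeff 1 := by
    have h1 := h 1 (by norm_num) (by norm_num)
    rwa [coeff_mul_expand_lt (by norm_num) _ _ hQ (by norm_num),
      coeff_mul_expand_lt (by norm_num) _ _ hQ' (by norm_num)] at h1
  have e2 : (Pgen r).coeff 2 + Q.coeff 1 = (Pgen r').coeff 2 + Q'.coeff 1 := by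
    have h2 := h 2 (by norm_num) (by norm_num)
    rwa [coeff2_mul_expand2 _ _ hQ hR0, coeff2_mul_expand2 _ _ hQ' hR'0] at h2
  have e3 : (Pgen r).coeff 3 + (Pgen r).coeff 1 * Q.coeff 1
      = (Pgen r').coeff 3 + (Pgen r').coeff 1 * Q'.coeff 1 := by
    have h3 := h 3 (by norm_num) (by norm_num)
    rwa [coeff3_mul_expand2 _ _ hQ, coeff3_mul_expand2 _ _ hQ'] at h3
  have hkey : (Pgen r).coeff 3 - (Pgen r').coeff 3
      = (Pgen r).coeff 1 * ((Pgen r).coeff 2 - (Pgen r').coeff 2) := by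
    linear_combination e3 - (Pgen r).coeff 1 * e2 - Q'.coeff 1 * e1
  -- expansion of first coefficients as linear combinations in ω
  have hc1 : (Pgen r).coeff 1 = (r 1 : F) + (r ω : F) * ω + (r (ω ^ 2) : F) * ω ^ 2 := by
    rw [coeff_one_Pgen, huniv, Finset.sum_insert m0, Finset.sum_insert m1,
      Finset.sum_insert mw, Finset.sum_singleton]
    ring
  have hc1' : (Pgen r').coeff 1 = (r' 1 : F) + (r' ω : F) * ω + (r' (ω ^ 2) : F) * ω ^ 2 := by
    rw [coeff_one_Pgen, huniv, Finset.sum_insert m0, Finset.sum_insert m1,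
      Finset.sum_insert mw, Finset.sum_singleton]
    ring
  have e1' : (r 1 : F) + (r ω : F) * ω + (r (ω ^ 2) : F) * ω ^ 2
      = (r' 1 : F) + (r' ω : F) * ω + (r' (ω ^ 2) : F) * ω ^ 2 := by
    rw [← hc1, ← hc1']; exact e1
  have hAB : ((r 1 : F) + (r (ω ^ 2) : F) + (r' 1 : F) + (r' (ω ^ 2) : F))
      + ((r ω : F) + (r (ω ^ 2) : F) + (r' ω : F) + (r' (ω ^ 2) : F)) * ω = 0 := by
    linear_combination e1' + ((r' (ω ^ 2) : F) - (r (ω ^ 2) : F)) * hω2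
      + ((r' 1 : F) + (r' (ω ^ 2) : F) + ((r' ω : F) + (r' (ω ^ 2) : F)) * ω) * htwo
  obtain ⟨hA, hB⟩ := L2 _ _
    (bitadd _ _ (bitadd _ _ (bitadd _ _ (bitF _ (hr 1)) (bitF _ (hr (ω ^ 2))))
      (bitF _ (hr' 1))) (bitF _ (hr' (ω ^ 2))))
    (bitadd _ _ (bitadd _ _ (bitadd _ _ (bitF _ (hr ω)) (bitF _ (hr (ω ^ 2))))
      (bitF _ (hr' ω))) (bitF _ (hr' (ω ^ 2)))) hAB
  have hε1 : (r 1 : F) + (r' 1 : F) = (r (ω ^ 2) : F) + (r' (ω ^ 2) : F) := by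
    linear_combination hA - ((r (ω ^ 2) : F) + (r' (ω ^ 2) : F)) * htwo
  have hε2 : (r ω : F) + (r' ω : F) = (r (ω ^ 2) : F) + (r' (ω ^ 2) : F) := by
    linear_combination hB - ((r (ω ^ 2) : F) + (r' (ω ^ 2) : F)) * htwo
  have hbitτ := bitadd _ _ (bitF _ (hr (ω ^ 2))) (bitF _ (hr' (ω ^ 2)))
  have bits_eq : ∀ m m' : ℕ, m < 2 → m' < 2 → (m : F) + (m' : F) = 0 → m = m' := by
    intro m m' hm hm' hz
    interval_cases m <;> interval_cases m'
    · rfl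
    · exfalso
      rw [Nat.cast_zero, Nat.cast_one, zero_add] at hz
      exact one_ne_zero hz
    · exfalso
      rw [Nat.cast_zero, Nat.cast_one, add_zero] at hz
      exact one_ne_zero hz
    · rfl
  rcases hbitτ with hε | hε
  · -- residues agree
    have k1 : r 1 = r' 1 := bits_eq _ _ (hr 1) (hr' 1) (by rw [hε1, hε])
    have kw : r ω = r' ω := bits_eq _ _ (hr ω) (hr' ω) (by rw [hε2, hε])
    have kt : r (ω ^ 2) = r' (ω ^ 2) := bits_eq _ _ (hr _) (hr' _) hε
    intro a ha
    have : a ∈ (univ : Finset F) := mem_univ a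
    rw [huniv] at this
    simp only [Finset.mem_insert, Finset.mem_singleton] at this
    rcases this with rfl | rfl | rfl | rfl
    · exact absurd rfl ha
    · exact k1
    · exact kw
    · exact kt
  · -- complementary case: contradiction
    exfalso
    have k1 : r 1 + r' 1 = 1 := bitsum1 _ _ (hr 1) (hr' 1) (by rw [hε1, hε])
    have kw : r ω + r' ω = 1 := bitsum1 _ _ (hr ω) (hr' ω) (by rw [hε2, hε])
    have kt : r (ω ^ 2) + r' (ω ^ 2) = 1 := bitsum1 _ _ (hr _) (hr' _) hε
    -- the product of the two generating polynomials is 1 + X^3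
    have hRR' : Pgen r * Pgen r' = 1 + X ^ 3 := by
      have hstep : Pgen r * Pgen r'
          = ∏ a ∈ (univ : Finset F), (1 + C a * X) ^ (r a + r' a) := by
        rw [Pgen, Pgen, ← Finset.prod_mul_distrib]
        exact Finset.prod_congr rfl (fun a _ => (pow_add _ _ _).symm)
      rw [hstep, huniv, Finset.prod_insert m0, Finset.prod_insert m1,
        Finset.prod_insert mw, Finset.prod_singleton, k1, kw, kt]
      have hz : (1 + C (0 : F) * X) ^ (r 0 + r' 0) = 1 := by simp
      rw [hz, one_mul, pow_one, pow_one, pow_one, map_one]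
      -- (1 + X)(1 + CωX)(1 + Cω²X) = 1 + X³
      have l1 : (C ω) ^ 2 = 1 + C ω := by
        rw [← map_pow]
        rw [show C (ω ^ 2) = C (1 + ω) from congrArg C hω2]
        rw [map_add, map_one]
      have l2 : (2 : F[X]) = 0 := by
        have hx : ((2 : ℕ) : F[X]) = C ((2 : ℕ) : F) := (Polynomial.C_eq_natCast 2).symm
        rw [show ((2 : ℕ) : F) = (2 : F) from by norm_num, htwo, map_zero] at hx
        exact_mod_cast hx
      rw [map_pow]
      linear_combination (X + C ω * X ^ 2 + (C ω + 1) * X ^ 3) * l1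
        + ((1 + C ω) * X + C ω * (1 + C ω) * X ^ 2 + C ω * X ^ 3) * l2
    -- coeff 3 of (Pgen r)^2 is zero
    have hsq : ((Pgen r) ^ 2).coeff 3 = 0 := by
      have hps : (Pgen r) ^ 2 = Pgen (fun a => 2 * r a) := by
        rw [Pgen, Pgen, ← Finset.prod_pow]
        apply Finset.prod_congr rfl
        intro a _
        rw [← pow_mul, Nat.mul_comm]
      rw [hps, peel (p := 2) (fun a => 2 * r a)]
      have hz : Pgen (F := F) (fun a => 2 * r a % 2) = 1 := by
        rw [Pgen]
        apply Finset.prod_eq_one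
        intro a _
        rw [Nat.mul_mod_right, pow_zero]
      rw [hz, one_mul, coeff_expand (by norm_num)]
      norm_num
    -- coeff 3 of Pgen r * (Pgen r - Pgen r') is zero
    have hT : (Pgen r * (Pgen r - Pgen r')).coeff 3 = 0 := by
      rw [coeff_mul_three', coeff_sub, coeff_sub, coeff_sub, coeff_sub, hR0, hR'0, ← e1, hkey]
      linear_combination ((Pgen r).coeff 1 * ((Pgen r).coeff 2 - (Pgen r').coeff 2)) * htwo
    -- combine
    have hdecomp : (Pgen r) ^ 2 = Pgen r * (Pgen r - Pgen r') + Pgen r * Pgen r' := by ring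
    have hcontr := congrArg (fun f : F[X] => f.coeff 3) hdecomp
    simp only [coeff_add] at hcontr
    rw [hsq, hT, hRR'] at hcontr
    simp only [coeff_add, coeff_one] at hcontr
    rw [coeff_X_pow] at hcontr
    norm_num at hcontr
end Q4Sec

/-! ### The key lemma: minimal differing coefficient lies in the index set -/

section KeySec
variable {F : Type*} [Field F] [Fintype F] [DecidableEq F] {p : ℕ} [Fact p.Prime] [CharP F p]

lemma keyLemma (hq : Fintype.card F = p ∨ (Fintype.card F = 4 ∧ p = 2)) :
    ∀ n : ℕ, ∀ c c' : F → ℕ, (∑ a ∈ univ.erase 0, c a) ≤ n → (∑ a ∈ univ.erase 0, c' a) ≤ n →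
    (∃ a, a ≠ 0 ∧ c a ≠ c' a) →
    ∃ m, (∃ j k : ℕ, 1 ≤ j ∧ j ≤ Fintype.card F - 1 ∧ m = j * p ^ k ∧ m ≤ n) ∧
      (Pgen c).coeff m ≠ (Pgen c').coeff m := by
  classical
  have hp1 : 1 < p := (Fact.out : p.Prime).one_lt
  have hq1 : p ≤ Fintype.card F := by rcases hq with h | ⟨h, h2⟩ <;> omega
  -- we prove a stronger statement including the "all lower coefficients agree" part
  suffices H : ∀ n : ℕ, ∀ c c' : F → ℕ,
      (∑ a ∈ univ.erase 0, c a) ≤ n → (∑ a ∈ univ.erase 0, c' a) ≤ n →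
      (∃ a, a ≠ 0 ∧ c a ≠ c' a) →
      ∃ m, (∃ j k : ℕ, 1 ≤ j ∧ j ≤ Fintype.card F - 1 ∧ m = j * p ^ k ∧ m ≤ n) ∧
        (Pgen c).coeff m ≠ (Pgen c').coeff m ∧
        ∀ i, i < m → (Pgen c).coeff i = (Pgen c').coeff i by
    intro n c c' hc hc' hne
    obtain ⟨m, hm1, hm2, _⟩ := H n c c' hc hc' hne
    exact ⟨m, hm1, hm2⟩
  intro n
  induction n using Nat.strong_induction_on with
  | _ n IH =>
    intro c c' hc hc' hne
    obtain ⟨a0, ha0, hcne⟩ := hne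
    have hn0 : 0 < n := by
      rcases Nat.eq_zero_or_pos n with rfl | h
      · exfalso
        have h1 : c a0 = 0 := by
          have := Finset.single_le_sum (f := c) (fun a _ => Nat.zero_le _)
            (Finset.mem_erase.2 ⟨ha0, mem_univ _⟩)
          omega
        have h2 : c' a0 = 0 := by
          have := Finset.single_le_sum (f := c') (fun a _ => Nat.zero_le _)
            (Finset.mem_erase.2 ⟨ha0, mem_univ _⟩)
          omega
        exact hcne (h1.trans h2.symm)
      · exact h
    by_cases hres : ∀ a, a ≠ 0 → c a % p = c' a % p
    · -- Case B : all residues agree, peel and recurse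
      set D := fun b => c ((frobEq F p).symm b) / p with hD
      set D' := fun b => c' ((frobEq F p).symm b) / p with hD'
      have hfrob0 : ∀ b : F, (frobEq F p).symm b = 0 ↔ b = 0 := by
        intro b
        constructor
        · intro h
          have := congrArg (frobEq F p) h
          rwa [Equiv.apply_symm_apply, frobEq_zero] at this
        · rintro rfl
          exact (Equiv.symm_apply_eq _).2 frobEq_zero.symm
      have hsumD : ∀ e : F → ℕ, (∑ a ∈ univ.erase 0, e a) ≤ n →
          (∑ b ∈ univ.erase 0, e ((frobEq F p).symm b) / p) ≤ n / p := by
        intro e he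
        have hre : ∑ b ∈ univ.erase 0, e ((frobEq F p).symm b) / p
            = ∑ a ∈ univ.erase 0, e a / p := by
          refine Finset.sum_equiv ((frobEq F p).symm) ?_ ?_
          · intro b
            simp only [Finset.mem_erase, mem_univ, and_true]
            constructor
            · intro hbz hz
              exact hbz ((hfrob0 b).1 hz)
            · intro hbz hz
              rw [hz] at hbz
              exact hbz ((hfrob0 0).2 rfl)
          · intro b _
            rfl
        rw [hre]
        rw [Nat.le_div_iff_mul_le (by omega)]
        calc (∑ a ∈ univ.erase 0, e a / p) * p = ∑ a ∈ univ.erase 0, (e a / p) * p := by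
              rw [Finset.sum_mul]
          _ ≤ ∑ a ∈ univ.erase 0, e a := Finset.sum_le_sum (fun a _ => Nat.div_mul_le_self _ _)
          _ ≤ n := he
      have hDne : ∃ b, b ≠ 0 ∧ D b ≠ D' b := by
        refine ⟨frobEq F p a0, ?_, ?_⟩
        · intro h
          rw [← frobEq_zero (F := F) (p := p)] at h
          exact ha0 ((frobEq F p).injective h)
        · rw [hD, hD']
          simp only [Equiv.symm_apply_apply]
          intro h
          apply hcne
          have h1 := Nat.div_add_mod (c a0) p
          have h2 := Nat.div_add_mod (c' a0) p
          rw [h, hres a0 ha0] at h1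
          omega
      obtain ⟨u, ⟨j, k, hj1, hjq, hujk, hun⟩, hdiff, hlow⟩ :=
        IH (n / p) (Nat.div_lt_self hn0 hp1) D D' (hsumD c hc) (hsumD c' hc') hDne
      have hpeel := peel (p := p) c
      have hpeel' := peel (p := p) c'
      have hreq : Pgen (F := F) (fun a => c a % p) = Pgen (fun a => c' a % p) :=
        Pgen_congr (fun a ha => hres a ha)
      obtain ⟨hlows, hdiffc⟩ := coeff_mul_expand_diff (p := p) (by omega)
        (Pgen (fun a => c' a % p)) (Pgen D) (Pgen D') hlow
      refine ⟨p * u, ⟨j, k + 1, hj1, hjq, by rw [hujk]; ring, ?_⟩, ?_, ?_⟩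
      · calc p * u ≤ p * (n / p) := Nat.mul_le_mul_left p hun
          _ ≤ n := Nat.mul_div_le n p
      · rw [hpeel, hpeel', hreq]
        intro hcon
        rw [hcon, sub_self] at hdiffc
        rw [Pgen_coeff_zero, one_mul] at hdiffc
        exact hdiff (sub_eq_zero.1 hdiffc.symm)
      · intro i hi
        rw [hpeel, hpeel', hreq]
        exact hlows i hi
    · -- Case A : some residue differs; use the base lemmas
      push_neg at hres
      obtain ⟨b0, hb0, hresne⟩ := hres
      have hD0 : (Pgen (F := F) (fun b => c ((frobEq F p).symm b) / p)).coeff 0 = 1 :=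
        Pgen_coeff_zero _
      have hD0' : (Pgen (F := F) (fun b => c' ((frobEq F p).symm b) / p)).coeff 0 = 1 :=
        Pgen_coeff_zero _
      have hpeel := peel (p := p) c
      have hpeel' := peel (p := p) c'
      have hbase : ∃ j, 0 < j ∧ j ≤ Fintype.card F - 1 ∧
          (Pgen c).coeff j ≠ (Pgen c').coeff j := by
        by_contra hno
        push_neg at hno
        have hall := hno
        rcases hq with hcard | ⟨hcard, hp2⟩
        · -- q = p
          have hceb : CEB p (Pgen (fun a => c a % p)) (Pgen (fun a => c' a % p)) := by
            intro i hi
            rcases Nat.eq_zero_or_pos i with rfl | hipos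
            · rw [Pgen_coeff_zero, Pgen_coeff_zero]
            · rw [← coeff_mul_expand_lt (p := p) (by omega) (Pgen fun a => c a % p) _ hD0 hi,
                ← coeff_mul_expand_lt (p := p) (by omega) (Pgen fun a => c' a % p) _ hD0' hi,
                ← hpeel, ← hpeel']
              exact hall i hipos (by omega)
          have := lemmaBase_p hcard (fun a => Nat.mod_lt _ (by omega))
            (fun a => Nat.mod_lt _ (by omega)) hceb
          exact hresne (this b0 hb0)
        · -- q = 4
          subst hp2
          have h4 := lemmaBase_4 hcard (r := fun a => c a % 2) (r' := fun a => c' a % 2)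
            (fun a => Nat.mod_lt _ (by omega)) (fun a => Nat.mod_lt _ (by omega))
            (Pgen (fun b => c ((frobEq F 2).symm b) / 2))
            (Pgen (fun b => c' ((frobEq F 2).symm b) / 2)) hD0 hD0'
            (fun j h1 h2 => by
              rw [← hpeel, ← hpeel']
              exact hall j h1 (by omega))
          exact hresne (h4 b0 hb0)
      obtain ⟨j0, hj0pos, hj0le, hj0ne⟩ := hbase
      have hex : ∃ i, (Pgen c).coeff i ≠ (Pgen c').coeff i := ⟨j0, hj0ne⟩
      set m := Nat.find hex with hm
      have hmdiff : (Pgen c).coeff m ≠ (Pgen c').coeff m := Nat.find_spec hex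
      have hmlow : ∀ i, i < m → (Pgen c).coeff i = (Pgen c').coeff i := by
        intro i hi
        by_contra hcon
        exact absurd (Nat.find_le (h := hex) hcon) (by omega)
      have hmj0 : m ≤ j0 := Nat.find_le hj0ne
      have hmpos : 0 < m := by
        rcases Nat.eq_zero_or_pos m with h0 | h
        · exfalso
          apply hmdiff
          rw [h0, Pgen_coeff_zero, Pgen_coeff_zero]
        · exact h
      have hmn : m ≤ n := by
        by_contra hcon
        push_neg at hcon
        apply hmdiff
        rw [coeff_eq_zero_of_natDegree_lt, coeff_eq_zero_of_natDegree_lt]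
        · exact lt_of_le_of_lt (le_trans (Pgen_natDegree_le c') hc') hcon
        · exact lt_of_le_of_lt (le_trans (Pgen_natDegree_le c) hc) hcon
      exact ⟨m, ⟨m, 0, hmpos, le_trans hmj0 hj0le, by rw [pow_zero, mul_one], hmn⟩,
        hmdiff, hmlow⟩
end KeySec

/-! ### Construction of witness vectors for minimality -/

section BuildSec
variable {F : Type*} [Field F] {p : ℕ} [Fact p.Prime] [CharP F p]

lemma stretch_list (pk : ℕ) (L : List F) :
    ∃ M : List F, M.length = L.length * pk ∧
      (M.map (fun a => 1 + C a * X)).prod = ((L.map (fun a => 1 + C a * X)).prod) ^ pk := by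
  induction L with
  | nil => exact ⟨[], by simp, by simp⟩
  | cons a L ih =>
    obtain ⟨M, hlen, hprod⟩ := ih
    refine ⟨List.replicate pk a ++ M, ?_, ?_⟩
    · simp [hlen]
      ring
    · rw [List.map_append, List.prod_append, hprod, List.map_replicate, List.prod_replicate,
        List.map_cons, List.prod_cons, mul_pow]

lemma prod_fin_eq_list (n : ℕ) (L : List F) (hlen : L.length = n) :
    ∏ i : Fin n, (1 + C (L.get (Fin.cast hlen.symm i)) * X)
      = (L.map (fun a => 1 + C a * X)).prod := by
  subst hlen
  rw [← List.prod_ofFn]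
  congr 1
  have : L.map (fun a => 1 + C a * X) = (List.ofFn L.get).map (fun a => 1 + C a * X) := by
    rw [List.ofFn_get]
  rw [this, List.map_ofFn]
  rfl

lemma build (n j k : ℕ) (hj : 1 ≤ j) (hmn : j * p ^ k ≤ n)
    (L₁ L₂ : List F) (h₁ : L₁.length ≤ j) (h₂ : L₂.length ≤ j) (d : F) (hd : d ≠ 0)
    (hP : (L₁.map (fun a => 1 + C a * X)).prod
      = (L₂.map (fun a => 1 + C a * X)).prod + C d * X ^ j) :
    ∃ v w : Fin n → F, (∀ i, i ≠ j * p ^ k → esymmVal n i v = esymmVal n i w) ∧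
      esymmVal n (j * p ^ k) v ≠ esymmVal n (j * p ^ k) w := by
  obtain ⟨M₁, hM₁len, hM₁⟩ := stretch_list (F := F) (p ^ k) L₁
  obtain ⟨M₂, hM₂len, hM₂⟩ := stretch_list (F := F) (p ^ k) L₂
  have hfit₁ : M₁.length ≤ n := by
    rw [hM₁len]
    calc L₁.length * p ^ k ≤ j * p ^ k := Nat.mul_le_mul_right _ h₁
      _ ≤ n := hmn
  have hfit₂ : M₂.length ≤ n := by
    rw [hM₂len]
    calc L₂.length * p ^ k ≤ j * p ^ k := Nat.mul_le_mul_right _ h₂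
      _ ≤ n := hmn
  set N₁ : List F := M₁ ++ List.replicate (n - M₁.length) 0 with hN₁
  set N₂ : List F := M₂ ++ List.replicate (n - M₂.length) 0 with hN₂
  have hN₁len : N₁.length = n := by simp [hN₁]; omega
  have hN₂len : N₂.length = n := by simp [hN₂]; omega
  set v : Fin n → F := fun i => N₁.get (Fin.cast hN₁len.symm i) with hv
  set w : Fin n → F := fun i => N₂.get (Fin.cast hN₂len.symm i) with hw
  have hEv : ∏ i : Fin n, (1 + C (v i) * X)
      = ((L₁.map (fun a => 1 + C a * X)).prod) ^ (p ^ k) := by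
    rw [hv, prod_fin_eq_list n N₁ hN₁len, hN₁, List.map_append, List.prod_append, hM₁]
    rw [List.map_replicate, List.prod_replicate]
    simp
  have hEw : ∏ i : Fin n, (1 + C (w i) * X)
      = ((L₂.map (fun a => 1 + C a * X)).prod) ^ (p ^ k) := by
    rw [hw, prod_fin_eq_list n N₂ hN₂len, hN₂, List.map_append, List.prod_append, hM₂]
    rw [List.map_replicate, List.prod_replicate]
    simp
  have hdiff : ∏ i : Fin n, (1 + C (v i) * X) - ∏ i : Fin n, (1 + C (w i) * X)
      = C (d ^ p ^ k) * X ^ (j * p ^ k) := by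
    rw [hEv, hEw]
    have hsub : ((L₁.map (fun a => 1 + C a * X)).prod) ^ (p ^ k)
        - ((L₂.map (fun a => 1 + C a * X)).prod) ^ (p ^ k)
        = (((L₁.map (fun a => 1 + C a * X)).prod)
          - ((L₂.map (fun a => 1 + C a * X)).prod)) ^ (p ^ k) :=
      (sub_pow_char_pow _ _ k).symm
    rw [hsub, hP, add_sub_cancel_left, mul_pow, ← C_pow, ← pow_mul]
  have hd' : d ^ p ^ k ≠ 0 := pow_ne_zero _ hd
  refine ⟨v, w, ?_, ?_⟩
  · intro i hi
    rw [esymmVal_eq_coeff, esymmVal_eq_coeff]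
    have := congrArg (fun f : F[X] => f.coeff i) hdiff
    simp only [coeff_sub, coeff_C_mul, coeff_X_pow] at this
    rw [if_neg hi, mul_zero] at this
    exact sub_eq_zero.1 this
  · rw [esymmVal_eq_coeff, esymmVal_eq_coeff]
    have := congrArg (fun f : F[X] => f.coeff (j * p ^ k)) hdiff
    simp only [coeff_sub, coeff_C_mul, coeff_X_pow, eq_self_iff_true, if_true, mul_one] at this
    intro hcon
    rw [hcon, sub_self] at this
    exact hd' this.symm
end BuildSec

/-! ### Witness lists for each q and j -/

section WitnessSec
variable {F : Type*} [Field F] [Fintype F] [DecidableEq F] {p : ℕ} [Fact p.Prime] [CharP F p]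

lemma witness_lists
    (hqq : (Fintype.card F = 3 ∧ p = 3) ∨ (Fintype.card F = 4 ∧ p = 2)
      ∨ (Fintype.card F = 5 ∧ p = 5))
    (j : ℕ) (hj1 : 1 ≤ j) (hjq : j ≤ Fintype.card F - 1) :
    ∃ (L₁ L₂ : List F) (d : F), L₁.length ≤ j ∧ L₂.length ≤ j ∧ d ≠ 0 ∧
      (L₁.map (fun a => 1 + C a * X)).prod
        = (L₂.map (fun a => 1 + C a * X)).prod + C d * X ^ j := by
  have hone : ∀ hj : j = 1, ∃ (L₁ L₂ : List F) (d : F), L₁.length ≤ j ∧ L₂.length ≤ j ∧ d ≠ 0 ∧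
      (L₁.map (fun a => 1 + C a * X)).prod
        = (L₂.map (fun a => 1 + C a * X)).prod + C d * X ^ j := by
    rintro rfl
    exact ⟨[1], [], 1, by simp, by simp, one_ne_zero, by simp⟩
  rcases hqq with ⟨hcard, hp⟩ | ⟨hcard, hp⟩ | ⟨hcard, hp⟩
  · -- q = 3
    subst hp
    have hch : (3 : F[X]) = 0 := by
      have := CharP.cast_eq_zero F[X] 3
      exact_mod_cast this
    rw [hcard] at hjq
    interval_cases j
    · exact hone rfl
    · refine ⟨[1, 2], [], 2, by simp, by simp, ?_, ?_⟩
      · intro h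
        have := (CharP.cast_eq_zero_iff F 3 2).1 (by exact_mod_cast h)
        norm_num at this
      · simp only [List.map_cons, List.map_nil, List.prod_cons, List.prod_nil, map_one,
          map_ofNat, mul_one]
        linear_combination (X : F[X]) * hch
  · -- q = 4
    subst hp
    have hch : (2 : F[X]) = 0 := by
      have := CharP.cast_eq_zero F[X] 2
      exact_mod_cast this
    have htwoF : (2 : F) = 0 := by
      have := CharP.cast_eq_zero F 2
      exact_mod_cast this
    rw [hcard] at hjq
    interval_cases j
    · exact hone rfl
    · refine ⟨[1, 1], [], 1, by simp, by simp, one_ne_zero, ?_⟩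
      simp only [List.map_cons, List.map_nil, List.prod_cons, List.prod_nil, map_one, mul_one]
      linear_combination (X : F[X]) * hch
    · -- j = 3 : need the cube roots of unity
      obtain ⟨ω, hω0, hω1⟩ : ∃ ω : F, ω ≠ 0 ∧ ω ≠ 1 := by
        by_contra hcon
        push_neg at hcon
        have hsub : (univ : Finset F) ⊆ {0, 1} := by
          intro x _
          simp only [Finset.mem_insert, Finset.mem_singleton]
          by_cases hx : x = 0
          · exact Or.inl hx
          · exact Or.inr (hcon x hx)
        have h1 := Finset.card_le_card hsub
        have h2 : ({0, 1} : Finset F).card ≤ 2 :=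
          le_trans (Finset.card_insert_le _ _) (by simp)
        rw [Finset.card_univ, hcard] at h1
        omega
      have hω3 : ω ^ 3 = 1 := by
        have := FiniteField.pow_card_sub_one_eq_one ω hω0
        rw [hcard] at this
        exact this
      have hsum : 1 + ω + ω ^ 2 = 0 := by
        have hfac : (ω - 1) * (ω ^ 2 + ω + 1) = 0 := by linear_combination hω3
        rcases mul_eq_zero.1 hfac with hz | hz
        · exact absurd (sub_eq_zero.1 hz) hω1
        · linear_combination hz
      have hω2 : ω ^ 2 = 1 + ω := by linear_combination hsum - (1 + ω) * htwoF
      have l1 : (C ω) ^ 2 = 1 + C ω := by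
        rw [← map_pow]
        rw [show C (ω ^ 2) = C (1 + ω) from congrArg C hω2]
        rw [map_add, map_one]
      refine ⟨[1, ω, ω ^ 2], [], 1, by simp, by simp, one_ne_zero, ?_⟩
      simp only [List.map_cons, List.map_nil, List.prod_cons, List.prod_nil, map_one, mul_one]
      rw [map_pow]
      linear_combination (X + C ω * X ^ 2 + (C ω + 1) * X ^ 3) * l1
        + ((1 + C ω) * X + C ω * (1 + C ω) * X ^ 2 + C ω * X ^ 3) * hch
  · -- q = 5
    subst hp
    have hch : (5 : F[X]) = 0 := by
      have := CharP.cast_eq_zero F[X] 5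
      exact_mod_cast this
    have hnz : ∀ m : ℕ, 0 < m → m < 5 → ((m : F) ≠ 0) := by
      intro m h1 h2 hz
      have := (CharP.cast_eq_zero_iff F 5 m).1 hz
      have := Nat.le_of_dvd h1 this
      omega
    rw [hcard] at hjq
    interval_cases j
    · exact hone rfl
    · refine ⟨[1, 4], [], 4, by simp, by simp, ?_, ?_⟩
      · have := hnz 4 (by norm_num) (by norm_num)
        exact_mod_cast this
      · simp only [List.map_cons, List.map_nil, List.prod_cons, List.prod_nil, map_one,
          map_ofNat, mul_one]
        linear_combination (X : F[X]) * hch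
    · refine ⟨[1, 2, 2], [3, 3, 4], 3, by simp, by simp, ?_, ?_⟩
      · have := hnz 3 (by norm_num) (by norm_num)
        exact_mod_cast this
      · simp only [List.map_cons, List.map_nil, List.prod_cons, List.prod_nil, map_one,
          map_ofNat, mul_one]
        linear_combination (-X - 5 * X ^ 2 - 7 * X ^ 3 : F[X]) * hch
    · refine ⟨[1, 2, 3, 4], [], 4, by simp, by simp, ?_, ?_⟩
      · have := hnz 4 (by norm_num) (by norm_num)
        exact_mod_cast this
      · simp only [List.map_cons, List.map_nil, List.prod_cons, List.prod_nil, map_one,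
          map_ofNat, mul_one]
        linear_combination (2 * X + 7 * X ^ 2 + 10 * X ^ 3 + 4 * X ^ 4 : F[X]) * hch
end WitnessSec

/-! ### Separation and minimality -/

section FinalSec
variable {F : Type*} [Field F] [Fintype F] [DecidableEq F] {p : ℕ} [Fact p.Prime] [CharP F p]

lemma separation_thm (hq2 : Fintype.card F = p ∨ (Fintype.card F = 4 ∧ p = 2)) (n : ℕ) :
    Separates F n (IndexSet p (Fintype.card F) n) := by
  intro v w horb
  have hne : ∃ a, a ≠ 0 ∧ cnt v a ≠ cnt w a := by
    by_contra hcon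
    push_neg at hcon
    apply horb
    apply sameOrbit_of_cnt_eq
    intro a
    by_cases ha : a = 0
    · subst ha
      have h1 := Finset.add_sum_erase univ (cnt v) (mem_univ (0 : F))
      have h2 := Finset.add_sum_erase univ (cnt w) (mem_univ (0 : F))
      rw [sum_cnt] at h1 h2
      have h3 : ∑ a ∈ univ.erase 0, cnt v a = ∑ a ∈ univ.erase 0, cnt w a :=
        Finset.sum_congr rfl (fun a ha => hcon a (Finset.mem_erase.1 ha).1)
      omega
    · exact hcon a ha
  have hs1 : ∑ a ∈ univ.erase 0, cnt v a ≤ n := by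
    have := Finset.sum_le_sum_of_subset (f := cnt v) (Finset.erase_subset 0 univ)
    rw [sum_cnt] at this
    exact this
  have hs2 : ∑ a ∈ univ.erase 0, cnt w a ≤ n := by
    have := Finset.sum_le_sum_of_subset (f := cnt w) (Finset.erase_subset 0 univ)
    rw [sum_cnt] at this
    exact this
  obtain ⟨m, hmem, hne'⟩ := keyLemma hq2 n (cnt v) (cnt w) hs1 hs2 hne
  refine ⟨m, hmem, ?_⟩
  rw [esymmVal_eq_coeff, esymmVal_eq_coeff, prod_eq_Pgen_cnt, prod_eq_Pgen_cnt]
  exact hne'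

lemma minimality_thm
    (hqq : (Fintype.card F = 3 ∧ p = 3) ∨ (Fintype.card F = 4 ∧ p = 2)
      ∨ (Fintype.card F = 5 ∧ p = 5)) (n : ℕ) :
    ∀ A : Set ℕ, A ⊂ IndexSet p (Fintype.card F) n → ¬ Separates F n A := by
  intro A hA hsep
  obtain ⟨m, hmI, hmA⟩ := Set.exists_of_ssubset hA
  obtain ⟨j, k, hj1, hjq, hm, hmn⟩ := hmI
  obtain ⟨L₁, L₂, d, h₁, h₂, hd, hP⟩ := witness_lists hqq j hj1 hjq
  have hfits : j * p ^ k ≤ n := by rw [← hm]; exact hmn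
  obtain ⟨v, w, hsame, hdiff⟩ := build n j k hj1 hfits L₁ L₂ h₁ h₂ d hd hP
  have horb : ¬ SameOrbit n v w := fun hso => hdiff (esymmVal_eq_of_sameOrbit hso _)
  obtain ⟨i, hiA, hine⟩ := hsep v w horb
  have him : i ≠ m := fun h => hmA (h ▸ hiA)
  exact hine (hsame i (by rw [hm] at him; exact him))
end FinalSec

end Sep15

/-- For `q ∈ {3, 4, 5}` and every `n`, the family `{s_m^{(n)} : m ∈ [n]_q}` is a
minimal separating set: it separates `S_n`-orbits in `𝔽_q^n` and no proper
subfamily does. -/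
theorem stmt15 (p : ℕ) (hp : p.Prime) (F : Type*) [Field F] [Fintype F] [CharP F p]
    (hq : Fintype.card F = 3 ∨ Fintype.card F = 4 ∨ Fintype.card F = 5) :
    ∀ n : ℕ, 0 < n →
      Separates F n (IndexSet p (Fintype.card F) n) ∧
      ∀ A : Set ℕ, A ⊂ IndexSet p (Fintype.card F) n → ¬ Separates F n A := by
  haveI := Fact.mk hp
  haveI := Classical.decEq F
  obtain ⟨e, hpp, hcard⟩ := FiniteField.card F p
  have hpe : p ∣ Fintype.card F := by
    rw [hcard]
    exact dvd_pow_self p (by exact_mod_cast e.ne_zero)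
  have hqq : (Fintype.card F = 3 ∧ p = 3) ∨ (Fintype.card F = 4 ∧ p = 2)
      ∨ (Fintype.card F = 5 ∧ p = 5) := by
    rcases hq with h | h | h
    · left
      refine ⟨h, ?_⟩
      rw [h] at hpe
      exact (Nat.prime_dvd_prime_iff_eq hp (by norm_num)).1 hpe
    · right; left
      refine ⟨h, ?_⟩
      rw [h] at hpe
      have h22 : p ∣ 2 ^ 2 := by
        have h4 : (2 : ℕ) ^ 2 = 4 := by norm_num
        rw [h4]; exact hpe
      have : p ∣ 2 := hp.dvd_of_dvd_pow h22
      exact (Nat.prime_dvd_prime_iff_eq hp (by norm_num)).1 this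
    · right; right
      refine ⟨h, ?_⟩
      rw [h] at hpe
      exact (Nat.prime_dvd_prime_iff_eq hp (by norm_num)).1 hpe
  have hq2 : Fintype.card F = p ∨ (Fintype.card F = 4 ∧ p = 2) := by
    rcases hqq with ⟨h1, h2⟩ | h | ⟨h1, h2⟩
    · left; rw [h1, h2]
    · right; exact h
    · left; rw [h1, h2]
  intro n hn
  exact ⟨Sep15.separation_thm hq2 n, Sep15.minimality_thm hqq n⟩
end

section
/- Let p be a prime and n a positive integer. For every finite set T of S_n-invariant polynomials in 𝔽_p[x_1,…,x_n] that separates S_n-orbits in 𝔽_p^n, one has |[n]_p| ≤ |T| + (p − 2). In particular, the cardinality of the separating set {s_m^{(n)} : m ∈ [n]_p} exceeds the minimal possible cardinality of a separating set in 𝔽_p[x_1,…,x_n]^{S_n} by at most p − 2. -/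
section Aux

variable {α : Type*} [DecidableEq α]

/-- If two tuples have the same multiset of values then they are in the same orbit. -/
lemma sameOrbit_of_valMult {n : ℕ} {v w : Fin n → α}
    (h : Multiset.map v Finset.univ.val = Multiset.map w Finset.univ.val) :
    SameOrbit n v w := by
  classical
  have hcard : ∀ u : Fin n → α, ∀ c : α, Fintype.card {i // u i = c}
      = Multiset.count c (Multiset.map u Finset.univ.val) := by
    intro u c
    rw [Multiset.count_map, Fintype.card_subtype]
    simp only [Finset.card, Finset.filter_val]
    congr 1
    exact Multiset.filter_congr (fun i _ => by constructor <;> exact fun h => h.symm)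
  have hc : ∀ c : α, Fintype.card {i // w i = c} = Fintype.card {i // v i = c} := by
    intro c
    rw [hcard, hcard, h]
  exact ⟨Equiv.ofFiberEquiv (fun c => Fintype.equivOfCardEq (hc c)),
    fun i => (Equiv.ofFiberEquiv_map _ i).symm⟩

/-- Tuples in the same orbit have the same multiset of values. -/
lemma valMult_of_sameOrbit {n : ℕ} {v w : Fin n → α} (h : SameOrbit n v w) :
    Multiset.map v Finset.univ.val = Multiset.map w Finset.univ.val := by
  obtain ⟨σ, hσ⟩ := h
  have hw : w = v ∘ σ := funext hσ
  calc Multiset.map v Finset.univ.val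
      = Multiset.map v (Multiset.map σ Finset.univ.val) := by
        rw [Multiset.map_univ_val_equiv]
    _ = Multiset.map (v ∘ σ) Finset.univ.val := (Multiset.map_map _ _ _)
    _ = Multiset.map w Finset.univ.val := by rw [hw]

/-- Every multiset of size `n` is the multiset of values of some tuple. -/
lemma exists_tuple {n : ℕ} (s : Multiset α) (hs : Multiset.card s = n) :
    ∃ v : Fin n → α, Multiset.map v Finset.univ.val = s := by
  have h : s.toList.length = n := by rwa [Multiset.length_toList]
  subst h
  refine ⟨s.toList.get, ?_⟩
  rw [Fin.univ_val_map, List.ofFn_get, Multiset.coe_toList]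

end Aux

/-- A separating set of polynomials gives a lower bound on cardinality via orbit counting. -/
lemma sym_card_le (p n : ℕ) (hp : p.Prime) (T : Finset (MvPolynomial (Fin n) (ZMod p)))
    (hsep : ∀ v w : Fin n → ZMod p, ¬ SameOrbit n v w →
      ∃ f ∈ T, MvPolynomial.eval v f ≠ MvPolynomial.eval w f) :
    (p + n - 1).choose n ≤ p ^ T.card := by
  classical
  haveI : Fact p.Prime := ⟨hp⟩
  set M : (Fin n → ZMod p) → Sym (ZMod p) n :=
    fun v => ⟨Multiset.map v Finset.univ.val, by simp⟩ with hM
  have hsurj : Function.Surjective M := by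
    intro s
    obtain ⟨v, hv⟩ := exists_tuple s.1 s.2
    exact ⟨v, Subtype.ext hv⟩
  set g := Function.surjInv hsurj with hg
  have hinj : Function.Injective
      (fun s : Sym (ZMod p) n => fun f : T => MvPolynomial.eval (g s) f.1) := by
    intro s t hst
    have hall : ∀ f ∈ T, MvPolynomial.eval (g s) f = MvPolynomial.eval (g t) f := by
      intro f hf
      exact congrFun hst ⟨f, hf⟩
    have horb : SameOrbit n (g s) (g t) := by
      by_contra hc
      obtain ⟨f, hf, hne⟩ := hsep _ _ hc
      exact hne (hall f hf)
    have hmm := valMult_of_sameOrbit horb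
    rw [← Function.surjInv_eq hsurj s, ← Function.surjInv_eq hsurj t]
    exact Subtype.ext hmm
  have hle : Fintype.card (Sym (ZMod p) n) ≤ Fintype.card (T → ZMod p) :=
    Fintype.card_le_of_injective _ hinj
  rw [Sym.card_sym_eq_choose, ZMod.card] at hle
  rwa [Fintype.card_fun, ZMod.card, Fintype.card_coe] at hle

/-- `Nat.factorial b ≤ a ^ b * p ^ (b - a)` for `1 ≤ a ≤ b < p`. -/
lemma fact_le_aux {p a : ℕ} (ha : 1 ≤ a) : ∀ b, a ≤ b → b < p → Nat.factorial b ≤ a ^ b * p ^ (b - a) := by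
  intro b
  induction b with
  | zero => intro h _; omega
  | succ b ih =>
    intro hab hbp
    rcases Nat.lt_or_ge a (b + 1) with h | h
    · have hab' : a ≤ b := by omega
      have hb := ih hab' (by omega)
      have hsub : b + 1 - a = (b - a) + 1 := by omega
      calc Nat.factorial (b + 1) = (b + 1) * Nat.factorial b := rfl
        _ ≤ p * (a ^ b * p ^ (b - a)) := Nat.mul_le_mul (by omega) hb
        _ = a ^ b * p ^ (b + 1 - a) := by rw [hsub, pow_succ]; ring
        _ ≤ a ^ (b + 1) * p ^ (b + 1 - a) :=
            Nat.mul_le_mul_right _ (Nat.pow_le_pow_right ha (Nat.le_succ b))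
    · have : a = b + 1 := by omega
      subst this
      simpa using Nat.factorial_le_pow (b + 1)

/-- The key counting inequality. -/
lemma key_ineq (p K a n : ℕ) (hp : 2 ≤ p) (ha1 : 1 ≤ a) (ha2 : a ≤ p - 1)
    (han : a * p ^ K ≤ n) (hE : (p - 1) ≤ K * (p - 1) + a) :
    p ^ (K * (p - 1) + a - (p - 1)) < (n + (p - 1)).choose (p - 1) := by
  set q := p - 1 with hq
  have hq1 : 1 ≤ q := by omega
  have hfact : Nat.factorial q ≤ a ^ q * p ^ (q - a) := fact_le_aux ha1 q ha2 (by omega)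
  have h1 : (n + 1) ^ q ≤ Nat.factorial q * (n + q).choose q := by
    rw [← Nat.ascFactorial_eq_factorial_mul_choose]
    exact Nat.pow_succ_le_ascFactorial (n + 1) q
  have h2 : Nat.factorial q * p ^ (K * q + a - q) ≤ n ^ q := by
    calc Nat.factorial q * p ^ (K * q + a - q) ≤ (a ^ q * p ^ (q - a)) * p ^ (K * q + a - q) :=
          Nat.mul_le_mul_right _ hfact
      _ = a ^ q * p ^ ((q - a) + (K * q + a - q)) := by rw [mul_assoc, pow_add]
      _ = a ^ q * p ^ (K * q) := by
            have he : (q - a) + (K * q + a - q) = K * q := by omega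
            rw [he]
      _ = (a * p ^ K) ^ q := by rw [mul_pow, ← pow_mul, Nat.mul_comm K q]
      _ ≤ n ^ q := Nat.pow_le_pow_left han q
  have h3 : n ^ q < (n + 1) ^ q := Nat.pow_lt_pow_left (by omega) (by omega)
  have h4 : Nat.factorial q * p ^ (K * q + a - q) < Nat.factorial q * (n + q).choose q :=
    lt_of_le_of_lt h2 (lt_of_lt_of_le h3 h1)
  exact Nat.lt_of_mul_lt_mul_left h4

/-- Upper bound for the cardinality of the index set. -/
lemma indexSet_ncard_le (p n : ℕ) (hp : 2 ≤ p) (hn : 0 < n) :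
    (IndexSet p p n).ncard ≤ Nat.log p n * (p - 1) + n / p ^ Nat.log p n := by
  classical
  set K := Nat.log p n with hK
  set a := n / p ^ K with ha
  set S : Finset ℕ :=
    ((Finset.range K ×ˢ Finset.Icc 1 (p - 1)).image fun kj => kj.2 * p ^ kj.1) ∪
      ((Finset.Icc 1 a).image fun j => j * p ^ K) with hS
  have hsub : IndexSet p p n ⊆ ↑S := by
    rintro m ⟨j, k, hj1, hj2, rfl, hmn⟩
    have hpk : p ^ k ≤ n := le_trans (Nat.le_mul_of_pos_left _ hj1) hmn
    have hk : k ≤ K := by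
      rw [hK]
      exact (Nat.le_log_iff_pow_le (by omega) (by omega)).mpr hpk
    rcases lt_or_eq_of_le hk with h | h
    · apply Finset.mem_coe.mpr
      apply Finset.mem_union_left
      apply Finset.mem_image.mpr
      exact ⟨(k, j), by simp [Finset.mem_product, Finset.mem_range, Finset.mem_Icc]; omega⟩
    · subst h
      apply Finset.mem_coe.mpr
      apply Finset.mem_union_right
      apply Finset.mem_image.mpr
      refine ⟨j, ?_, rfl⟩
      rw [Finset.mem_Icc]
      refine ⟨hj1, ?_⟩
      rw [ha]
      exact (Nat.le_div_iff_mul_le (pow_pos (by omega : 0 < p) K)).mpr hmn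
  have hle : (IndexSet p p n).ncard ≤ S.card := by
    have := Set.ncard_le_ncard hsub S.finite_toSet
    rwa [Set.ncard_coe_finset] at this
  refine hle.trans ?_
  refine (Finset.card_union_le _ _).trans ?_
  have h1 : ((Finset.range K ×ˢ Finset.Icc 1 (p - 1)).image
      fun kj : ℕ × ℕ => kj.2 * p ^ kj.1).card ≤ K * (p - 1) := by
    refine (Finset.card_image_le).trans ?_
    rw [Finset.card_product, Finset.card_range, Nat.card_Icc]
    have h : p - 1 + 1 - 1 = p - 1 := by omega
    rw [h]
  have h2 : ((Finset.Icc 1 a).image fun j => j * p ^ K).card ≤ a := by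
    refine (Finset.card_image_le).trans ?_
    rw [Nat.card_Icc]
    simp
  exact le_trans (Nat.add_le_add h1 h2) (le_refl _)

/-- Every finite set `T` of `S_n`-invariant polynomials over `𝔽_p` separating the
`S_n`-orbits in `𝔽_p^n` satisfies `|[n]_p| ≤ |T| + (p - 2)`; i.e. the separating
set `{s_m^{(n)} : m ∈ [n]_p}` exceeds the minimal possible cardinality of a
separating set by at most `p - 2`. -/
theorem stmt16 (p : ℕ) (hp : p.Prime) (n : ℕ) (hn : 0 < n)
    (T : Finset (MvPolynomial (Fin n) (ZMod p)))
    (hinv : ∀ f ∈ T, ∀ π : Equiv.Perm (Fin n), MvPolynomial.rename π f = f)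
    (hsep : ∀ v w : Fin n → ZMod p, ¬ SameOrbit n v w →
      ∃ f ∈ T, MvPolynomial.eval v f ≠ MvPolynomial.eval w f) :
    (IndexSet p p n).ncard ≤ T.card + (p - 2) := by
  classical
  have hp2 : 2 ≤ p := hp.two_le
  set K := Nat.log p n with hK
  set a := n / p ^ K with ha
  have hb : (IndexSet p p n).ncard ≤ K * (p - 1) + a := indexSet_ncard_le p n hp2 hn
  by_cases htriv : (IndexSet p p n).ncard ≤ p - 2
  · omega
  push_neg at htriv
  have hpk : p ^ K ≤ n := Nat.pow_log_le_self p hn.ne'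
  have ha1 : 1 ≤ a := by
    rw [ha]
    exact (Nat.one_le_div_iff (pow_pos (by omega : 0 < p) K)).mpr hpk
  have ha2 : a ≤ p - 1 := by
    have h1 : n < p ^ (K + 1) := Nat.lt_pow_succ_log_self (by omega) n
    have h2 : a < p := by
      rw [ha]
      apply Nat.div_lt_of_lt_mul
      rw [pow_succ] at h1
      exact h1
    omega
  have han : a * p ^ K ≤ n := by
    rw [ha]
    exact Nat.div_mul_le_self n _
  have hE : (p - 1) ≤ K * (p - 1) + a := by omega
  have hkey := key_ineq p K a n hp2 ha1 ha2 han hE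
  have hcard := sym_card_le p n hp T hsep
  have hch : (n + (p - 1)).choose (p - 1) = (p + n - 1).choose n := by
    have h1 : p + n - 1 = n + (p - 1) := by omega
    rw [h1]
    have h2 := Nat.choose_symm (Nat.le_add_left (p - 1) n)
    rw [Nat.add_sub_cancel] at h2
    exact h2.symm
  rw [hch] at hkey
  have hlt : p ^ (K * (p - 1) + a - (p - 1)) < p ^ T.card := lt_of_lt_of_le hkey hcard
  have hTlb : K * (p - 1) + a - (p - 1) < T.card :=
    (Nat.pow_lt_pow_iff_right (by omega)).mp hlt
  omega
end

section
/- Let p be a prime, m ∈ {1,…,p−1}, k ∈ ℤ_{≥0}, and let n be a positive integer with m·p^k ≤ n. Then ⌈log_p binom(n+p−1, p−1)⌉ > (p−1)·k + m − (p−1), where binom(n+p−1, p−1) is the binomial coefficient (equal to the number of S_n-orbits in 𝔽_p^n). -/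
/-!
Writing `r = p - 1`, `binom(n + r, r) = ∏_{i<r} (n + 1 + i) / (i + 1)`. Since `n ≥ m p^k`, the
factor with index `i` exceeds `p^k` when `i < m`, and exceeds `p^(k-1)` when `m ≤ i < p - 1`
because then `i + 1 < p`. So the binomial coefficient exceeds `p^(m k + (p-1-m)(k-1))`, and this
exponent is `(p-1)k + m - (p-1)` for `k ≥ 1` and `0 ≥ m - (p-1)` for `k = 0`.
-/

open Finset
open scoped Nat

theorem Nat.prod_range_lt_choose {n r : ℕ} {a : ℕ → ℕ} (hr : 0 < r) (ha : ∀ i < r, 0 < a i)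
    (h : ∀ i < r, a i * (i + 1) < n + 1 + i) :
    ∏ i ∈ range r, a i < (n + r).choose r := by
  have hprod : (∏ i ∈ range r, a i) * r ! < r ! * (n + r).choose r := by
    rw [← Nat.ascFactorial_eq_factorial_mul_choose, Nat.ascFactorial_eq_prod_range,
      ← prod_range_add_one_eq_factorial, ← prod_mul_distrib]
    refine prod_lt_prod_of_nonempty (fun i hi => ?_) (fun i hi => h i (mem_range.1 hi))
      (nonempty_range_iff.2 hr.ne')
    exact Nat.mul_pos (ha i (mem_range.1 hi)) i.succ_pos
  rw [Nat.mul_comm] at hprod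
  exact Nat.lt_of_mul_lt_mul_left hprod

theorem Nat.pow_lt_choose_add_sub_one {p m k n : ℕ} (hm : 1 ≤ m) (hmp : m ≤ p - 1)
    (hn : m * p ^ k ≤ n) :
    p ^ (m * k + (p - 1 - m) * (k - 1)) < (n + p - 1).choose (p - 1) := by
  have hp : 0 < p := by omega
  obtain ⟨s, hs⟩ : ∃ s, p - 1 = m + s := ⟨p - 1 - m, by omega⟩
  have hfactor : ∀ i < m + s,
      (if i < m then p ^ k else p ^ (k - 1)) * (i + 1) < n + 1 + i := by
    intro i hi
    split_ifs with him
    · calc p ^ k * (i + 1) ≤ p ^ k * m := Nat.mul_le_mul_left _ him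
        _ ≤ n := by rwa [Nat.mul_comm]
        _ < n + 1 + i := by omega
    · rcases k with _ | k
      · simp only [zero_tsub, pow_zero, Nat.one_mul, Nat.mul_one] at hn ⊢
        omega
      · calc p ^ k * (i + 1) ≤ p ^ k * p := Nat.mul_le_mul_left _ (by omega)
          _ ≤ m * p ^ (k + 1) := by rw [← pow_succ]; exact Nat.le_mul_of_pos_left _ hm
          _ < n + 1 + i := by omega
  have key := Nat.prod_range_lt_choose (by omega) (fun i _ => by split_ifs <;> positivity) hfactor
  have hfirst : ∏ i ∈ range m, (if i < m then p ^ k else p ^ (k - 1)) = (p ^ k) ^ m := by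
    rw [prod_congr rfl fun i hi => if_pos (mem_range.1 hi), prod_const, card_range]
  rw [prod_range_add, hfirst] at key
  simp only [add_lt_iff_neg_left, Nat.not_lt_zero, if_false, prod_const, card_range] at key
  rwa [hs, show n + p - 1 = n + (m + s) by omega, Nat.add_sub_cancel_left, pow_add, pow_mul',
    pow_mul']

theorem stmt17_general (p : ℕ) (m k n : ℕ)
    (hm1 : 1 ≤ m) (hmp : m ≤ p - 1) (hn : m * p ^ k ≤ n) :
    ((p : ℤ) - 1) * k + m - ((p : ℤ) - 1) <
      ⌈Real.logb p ((Nat.choose (n + p - 1) (p - 1) : ℝ))⌉ := by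
  have hbound := Nat.pow_lt_choose_add_sub_one hm1 hmp hn
  set t := m * k + (p - 1 - m) * (k - 1)
  have hexp : ((p : ℤ) - 1) * k + m - ((p : ℤ) - 1) ≤ t := by
    obtain ⟨s, rfl⟩ : ∃ s, p = m + s + 1 := ⟨p - 1 - m, by omega⟩
    rcases k with _ | k
    · simp [t]
    · simp only [t, Nat.add_sub_cancel, Nat.add_sub_cancel_left]
      push_cast
      exact le_of_eq (by ring)
  have hp : (1 : ℝ) < p := by exact_mod_cast (by omega : 1 < p)
  have hlog : (t : ℝ) < Real.logb p ((n + p - 1).choose (p - 1)) := by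
    have hpos : (0 : ℝ) < (n + p - 1).choose (p - 1) := by
      exact_mod_cast (Nat.zero_le _).trans_lt hbound
    rw [Real.lt_logb_iff_rpow_lt hp hpos, Real.rpow_natCast]
    exact_mod_cast hbound
  rw [Int.lt_ceil]
  exact lt_of_le_of_lt (by exact_mod_cast hexp) hlog

/-- For a prime `p`, `m ∈ {1, …, p-1}`, `k ≥ 0` and `n ≥ m·p^k`, one has
`⌈log_p (binom(n+p-1, p-1))⌉ > (p-1)·k + m - (p-1)`. -/
theorem stmt17 (p : ℕ) (hp : p.Prime) (m k n : ℕ)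
    (hm1 : 1 ≤ m) (hmp : m ≤ p - 1) (hn : m * p ^ k ≤ n) :
    ((p : ℤ) - 1) * k + m - ((p : ℤ) - 1) <
      ⌈Real.logb p ((Nat.choose (n + p - 1) (p - 1) : ℝ))⌉ :=
  stmt17_general p m k n hm1 hmp hn
end
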